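/- arXiv:2001.05132 — 2 statements merged into one kernel-verified Lean document; each statement's English description precedes it below -/
import Mathlib

section
/- The recursive Tower of Hanoi procedure correctly transfers a stack: starting from pegs (I ++ Ls, Lt, La), executing move on the stack I with source s, target t, and auxiliary a yields pegs (Ls, I ++ Lt, La). -/
/-- Pop a disk from the source peg and push it onto the target peg. -/
def popPush {D : Type} : List D → List D → List D × List D
  | [], T => ([], T)
  | k :: S', T => (S', k :: T)

/-- Auxiliary recursion on the reversed stack: `moveRev r (S, T, A)` performs
the Hanoi moves for the stack `r.reverse` with source contents `S`, target
contents `T`, auxiliary contents `A`, returning the new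
(source, target, auxiliary) contents.  For `I = I' ++ [k]` (i.e. reversed
stack `k :: I'.reverse`) it first recursively moves `I'` from source to
auxiliary, then pops `k` from source and pushes it onto the target, then
recursively moves `I'` from auxiliary to target. -/
def moveRev {D : Type} : List D → List D × List D × List D → List D × List D × List D
  | [], c => c
  | k :: r, (S, T, A) =>
      let c1 := moveRev r (S, A, T)      -- move I' from source to auxiliary
      let S1 := c1.1                     -- new source contents
      let A1 := c1.2.1                   -- new auxiliary-peg contents
      let T1 := c1.2.2                   -- new target-peg contents
      let p := popPush S1 T1             -- move disk k from source to target
      let c2 := moveRev r (A1, p.2, p.1) -- move I' from auxiliary to target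
      (c2.2.2, c2.2.1, c2.1)

/-- `move I (S, T, A)`: the recursive Tower of Hanoi procedure transferring
the stack `I` from the source peg (contents `S`) to the target peg
(contents `T`) using the auxiliary peg (contents `A`). -/
def move {D : Type} (I : List D) (c : List D × List D × List D) :
    List D × List D × List D :=
  moveRev I.reverse c

lemma moveRev_correct {D : Type} (r : List D) : ∀ Ls Lt La : List D,
    moveRev r (r.reverse ++ Ls, Lt, La) = (Ls, r.reverse ++ Lt, La) := by
  induction r with
  | nil => intro Ls Lt La; rfl
  | cons k r ih =>
      intro Ls Lt La
      have h1 : (k :: r).reverse ++ Ls = r.reverse ++ (k :: Ls) := by simp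
      have h2 : (k :: r).reverse ++ Lt = r.reverse ++ (k :: Lt) := by simp
      rw [h1, h2]
      simp only [moveRev, ih]
      rfl

/-- The recursive Tower of Hanoi procedure correctly transfers a stack:
starting from pegs `(I ++ Ls, Lt, La)`, executing `move` on the stack `I`
yields pegs `(Ls, I ++ Lt, La)`. -/
theorem stmt_6 {D : Type} (I Ls Lt La : List D) :
    move I (I ++ Ls, Lt, La) = (Ls, I ++ Lt, La) := by
  simpa [move] using moveRev_correct I.reverse Ls Lt La |>.trans (by simp)
end

section
/- The pop-push indices generated by the Hanoi encoding of move(s,t,a,I,m) are exactly the interval [m, 2^{|I|} + m − 2]: the multiset of counter indices at which pop_push steps occur is {m, m+1, …, m + 2^{|I|} − 2}, each occurring exactly once. -/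
/-- The list of counter indices at which pop-push steps occur during
`move(s,t,a,I,m)` with `|I| = n` and initial counter `m`:
`move` on a stack of size `n+1` performs the pop-push steps of the first
recursive call (counter `m`), then a pop-push at counter `2^n + m - 1`,
then the pop-push steps of the second recursive call (counter `2^n + m`). -/
def idx : ℕ → ℕ → List ℕ
  | 0, _ => []
  | n + 1, m => idx n m ++ [2 ^ n + m - 1] ++ idx n (2 ^ n + m)

theorem List.range'_add_one_add (s a b : ℕ) :
    List.range' s (a + 1 + b) = List.range' s a ++ [s + a] ++ List.range' (s + a + 1) b := by
  simp [← List.range'_append_1, add_assoc]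

/-- The pop-push indices generated by the Hanoi encoding are exactly the
consecutive integers from `m` of length `2^n - 1`. -/
theorem stmt_9 (n m : ℕ) : idx n m = List.range' m (2 ^ n - 1) := by
  induction n generalizing m with
  | zero => rfl
  | succ n ih =>
    have hpos : 0 < 2 ^ n := Nat.two_pow_pos n
    have hlen : 2 ^ (n + 1) - 1 = (2 ^ n - 1) + 1 + (2 ^ n - 1) := by rw [pow_succ]; omega
    rw [idx, ih, ih, hlen, List.range'_add_one_add, show 2 ^ n + m = m + (2 ^ n - 1) + 1 by omega,
      Nat.add_sub_cancel]
end
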